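/- arXiv:2011.02349 — 2 statements merged into one kernel-verified Lean document; each statement's English description precedes it below -/
import Mathlib

section
/- In the epidemic setting with severity, let t ∈ ℝ with Ω_t nonempty, let τ > 0 and let g be in the range of G. Then #Ω_t · P_t(τ^σ_t = τ, Ĝ_t = g) = Σ_{ω' ∈ Ω_{t−τ,g}} n^τ(ω'); equivalently, if Ω_{t−τ,g} is nonempty, P_t(τ^σ_t = τ, Ĝ_t = g) = E_{P_{t−τ,g}}(n^τ) · (#Ω_{t−τ,g}/#Ω_t), i.e. the probability that an individual infected at t has an infector who was infected at time t − τ and has severity g equals the average over Ω_{t−τ,g} of the number of people infected at infectious age τ, weighted by #Ω_{t−τ,g}/#Ω_t. -/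
open Finset
open scoped Classical ENNReal NNReal

noncomputable section

variable {Ω : Type*} [Fintype Ω]

/-- Number of elements of `Ω` satisfying `E`, as a real number. -/
def cnt (E : Ω → Prop) : ℝ := ((Finset.univ.filter E).card : ℝ)

/-- The uniform (counting) probability of the event `E`. -/
def pr (E : Ω → Prop) : ℝ := cnt E / (Fintype.card Ω : ℝ)

/-- The conditional probability of the event `E` given the event `C`
(junk value `0` if `C` is empty). -/
def prC (C E : Ω → Prop) : ℝ := cnt (fun ω => C ω ∧ E ω) / cnt C

/-- The expectation of `X` under the uniform probability measure. -/
def expec (X : Ω → ℝ) : ℝ := (∑ ω, X ω) / (Fintype.card Ω : ℝ)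

/-- The conditional expectation of `X` given the event `C`, i.e. the average of `X`
over `C` (junk value `0` if `C` is empty). -/
def expecC (C : Ω → Prop) (X : Ω → ℝ) : ℝ :=
  (∑ ω ∈ Finset.univ.filter C, X ω) / cnt C

end

noncomputable section

variable {Ω : Type*} [Fintype Ω]

/-- `ninf tI σ τ ω` is the number of people infected by `ω` exactly at `ω`'s infectious
age `τ`: the number of `ω' ∈ Ω_{>0}` with `σ ω' = ω` and generation time `τ^σ ω' = τ`. -/
def ninf (tI : Ω → ℝ) (σ : Ω → Ω) (τ : ℝ) (ω : Ω) : ℝ :=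
  cnt (fun ω' => 0 < tI ω' ∧ σ ω' = ω ∧ tI ω' - tI (σ ω') = τ)

/-- The (finitely many) positive times `τ` such that `Ω_{t-τ}` is nonempty. -/
def genTimes (tI : Ω → ℝ) (t : ℝ) : Finset ℝ :=
  (Finset.univ.image (fun ω' => t - tI ω')).filter (fun τ => 0 < τ)

end

/-! Double counting: the individuals infected at `t` whose infector was infected at `t - τ`
with severity `g` are partitioned by their infector, and the part belonging to `ω'` has
`n^τ(ω')` elements. -/

section Counting

variable {Ω β : Type*} [Fintype Ω]

theorem cnt_eq_sum_cnt_fiber (E : Ω → Prop) (f : Ω → β) (s : Finset β)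
    (hf : ∀ ω, E ω → f ω ∈ s) :
    cnt E = ∑ b ∈ s, cnt (fun ω => E ω ∧ f ω = b) := by
  unfold cnt
  rw [← Nat.cast_sum, card_eq_sum_card_fiberwise (fun ω hω => hf ω (mem_filter.1 hω).2)]
  simp only [filter_filter]
  congr!

theorem cnt_eq_zero_of_imp {C E : Ω → Prop} (hEC : ∀ ω, E ω → C ω) (hC : cnt C = 0) :
    cnt E = 0 := by
  have hle : cnt E ≤ cnt C := by
    unfold cnt
    exact_mod_cast card_le_card (monotone_filter_right _ fun ω _ => hEC ω)
  have : 0 ≤ cnt E := Nat.cast_nonneg _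
  linarith

theorem cnt_mul_prC (C E : Ω → Prop) : cnt C * prC C E = cnt (fun ω => C ω ∧ E ω) := by
  by_cases hC : cnt C = 0
  · rw [hC, zero_mul, cnt_eq_zero_of_imp (fun _ h => h.1) hC]
  · exact mul_div_cancel₀ _ hC

theorem expecC_mul_cnt_div (C : Ω → Prop) (X : Ω → ℝ) (c : ℝ) :
    expecC C X * (cnt C / c) = (∑ ω ∈ univ.filter C, X ω) / c := by
  by_cases hC : cnt C = 0
  · have hempty : univ.filter C = ∅ := by
      simpa only [cnt, Nat.cast_eq_zero, card_eq_zero] using hC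
    simp [hC, hempty]
  · rw [expecC, div_mul_div_cancel₀ hC]

end Counting

section Epidemic

variable {Ω : Type*} [Fintype Ω]

theorem cnt_infectedAt_genTime_severity_eq_sum_ninf (tI : Ω → ℝ) (σ : Ω → Ω) (G : Ω → ℝ)
    (t τ g : ℝ) :
    cnt (fun ω => tI ω = t ∧ 0 < tI ω ∧ tI ω - tI (σ ω) = τ ∧ G (σ ω) = g) =
      ∑ ω' ∈ univ.filter (fun ω' => tI ω' = t - τ ∧ G ω' = g), ninf tI σ τ ω' := by
  rw [cnt_eq_sum_cnt_fiber _ σ (univ.filter fun ω' => tI ω' = t - τ ∧ G ω' = g)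
    fun ω ⟨ht, _, hτ, hg⟩ => mem_filter.2 ⟨mem_univ _, by linarith, hg⟩]
  refine sum_congr rfl fun ω' hω' => congrArg cnt (funext fun ω => propext ?_)
  obtain ⟨ht', hg'⟩ := (mem_filter.1 hω').2
  constructor
  · rintro ⟨⟨_, hpos, hτ, _⟩, rfl⟩
    exact ⟨hpos, rfl, hτ⟩
  · rintro ⟨hpos, rfl, hτ⟩
    exact ⟨⟨by linarith, hpos, hτ, hg'⟩, rfl⟩

end Epidemic

theorem statement_8_general {Ω : Type*} [Fintype Ω] (tI : Ω → ℝ) (σ : Ω → Ω)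
    (G : Ω → ℝ) (t : ℝ)
    (τ : ℝ) (g : ℝ) :
    cnt (fun ω => tI ω = t) *
        prC (fun ω => tI ω = t)
          (fun ω => 0 < tI ω ∧ tI ω - tI (σ ω) = τ ∧ G (σ ω) = g) =
      ∑ ω' ∈ Finset.univ.filter (fun ω' => tI ω' = t - τ ∧ G ω' = g),
        ninf tI σ τ ω'
    ∧
    ((Finset.univ.filter (fun ω' => tI ω' = t - τ ∧ G ω' = g)).Nonempty →
      prC (fun ω => tI ω = t)
          (fun ω => 0 < tI ω ∧ tI ω - tI (σ ω) = τ ∧ G (σ ω) = g) =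
        expecC (fun ω => tI ω = t - τ ∧ G ω = g) (ninf tI σ τ) *
          (cnt (fun ω => tI ω = t - τ ∧ G ω = g) / cnt (fun ω => tI ω = t))) := by
  have hcount := cnt_infectedAt_genTime_severity_eq_sum_ninf tI σ G t τ g
  refine ⟨(cnt_mul_prC _ _).trans hcount, fun _ => ?_⟩
  rw [expecC_mul_cnt_div, prC, hcount]
  congr!

/-- joint distribution of generation time and infector's severity.
Epidemic setting with severity `G : Ω → ℝ`, `Ĝ = G ∘ σ` on `Ω_{>0}`; for `τ > 0` and
`g` in the range of `G`:
`#Ω_t · P_t(τ^σ_t = τ, Ĝ_t = g) = Σ_{ω' ∈ Ω_{t−τ,g}} n^τ(ω')`, and equivalently, if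
`Ω_{t−τ,g}` is nonempty,
`P_t(τ^σ_t = τ, Ĝ_t = g) = E_{P_{t−τ,g}}(n^τ) · (#Ω_{t−τ,g}/#Ω_t)`. -/
theorem statement_8 {Ω : Type*} [Fintype Ω] (tI : Ω → ℝ) (σ : Ω → Ω)
    (hσ : ∀ ω, 0 < tI ω → tI (σ ω) < tI ω)
    (G : Ω → ℝ) (t : ℝ)
    (hne : (Finset.univ.filter (fun ω => tI ω = t)).Nonempty)
    (τ : ℝ) (hτ : 0 < τ) (g : ℝ) (hg : ∃ ω, G ω = g) :
    cnt (fun ω => tI ω = t) *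
        prC (fun ω => tI ω = t)
          (fun ω => 0 < tI ω ∧ tI ω - tI (σ ω) = τ ∧ G (σ ω) = g) =
      ∑ ω' ∈ Finset.univ.filter (fun ω' => tI ω' = t - τ ∧ G ω' = g),
        ninf tI σ τ ω'
    ∧
    ((Finset.univ.filter (fun ω' => tI ω' = t - τ ∧ G ω' = g)).Nonempty →
      prC (fun ω => tI ω = t)
          (fun ω => 0 < tI ω ∧ tI ω - tI (σ ω) = τ ∧ G (σ ω) = g) =
        expecC (fun ω => tI ω = t - τ ∧ G ω = g) (ninf tI σ τ) *
          (cnt (fun ω => tI ω = t - τ ∧ G ω = g) / cnt (fun ω => tI ω = t))) :=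
  statement_8_general tI σ G t τ g
end

section
/- Let Ω be a nonempty finite set equipped with the uniform probability measure P and expectation E. Let n, n⁰ : Ω → ℝ≥0, T : Ω → [0,∞], G : Ω → ℝ with finite range, A : Ω → {app, no app}, ξ ∈ [0,1], and fix τ ∈ [0,∞). Assume (i) for every g, a with P(G = g, A = a) > 0 and every ρ with P(T = ρ, G = g, A = a) > 0, E(n | T = ρ, G = g, A = a) = (1 − ξ·1_{ρ ≤ τ})·E(n⁰ | T = ρ, G = g, A = a); (ii) n⁰ and T are conditionally independent given the pair (G, A); and (iii) A is independent of the pair (G, n⁰) under P. Then for every g, a with P(G = g, A = a) > 0, E(n | G = g, A = a) = E(n⁰ | G = g)·(1 − ξ·P(T ≤ τ | G = g, A = a)). -/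
open Finset
open scoped Classical ENNReal NNReal

/-- Whether or not an individual uses the contact-tracing app. -/
inductive AppUse : Type
  | app : AppUse
  | noapp : AppUse
  deriving DecidableEq

instance : Fintype AppUse :=
  ⟨{AppUse.app, AppUse.noapp}, fun x => by cases x <;> simp⟩

/-!
Conditional independence of `n⁰` and `T` given `(G, A)` makes the average of `n⁰` over
`{T = ρ, G = g, A = a}` equal to its average `m` over `{G = g, A = a}`, so the suppression
hypothesis says that `n` averages to `(1 - ξ·1_{ρ ≤ τ})·m` on each fibre of `T`. Averaging over
the fibres (tower property) gives `E(n | G = g, A = a) = m·(1 - ξ·P(T ≤ τ | G = g, A = a))`, and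
independence of `A` from `(G, n⁰)` identifies `m` with `E(n⁰ | G = g)`.
-/

section UniformProbability

variable {Ω : Type*} [Fintype Ω]

lemma cnt_congr {P Q : Ω → Prop} (h : ∀ ω, P ω ↔ Q ω) : cnt P = cnt Q := by
  rw [funext fun ω => propext (h ω)]

lemma cnt_nonneg (P : Ω → Prop) : 0 ≤ cnt P := Nat.cast_nonneg _

lemma cnt_le_card (P : Ω → Prop) : cnt P ≤ Fintype.card Ω := by
  unfold cnt
  exact_mod_cast card_filter_le _ _

lemma cnt_mono {P Q : Ω → Prop} (h : ∀ ω, P ω → Q ω) : cnt P ≤ cnt Q := by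
  unfold cnt
  exact_mod_cast card_le_card fun ω => by simpa only [mem_filter, mem_univ, true_and] using h ω

lemma pr_pos_iff_cnt_pos {P : Ω → Prop} : 0 < pr P ↔ 0 < cnt P := by
  unfold pr
  constructor
  · intro h
    by_contra hle
    have h0 : cnt P = 0 := le_antisymm (not_lt.mp hle) (cnt_nonneg P)
    simp [h0] at h
  · intro h
    exact div_pos h (h.trans_le (cnt_le_card P))

lemma pr_mul_card (P : Ω → Prop) (hΩ : (Fintype.card Ω : ℝ) ≠ 0) :
    pr P * Fintype.card Ω = cnt P :=
  div_mul_cancel₀ _ hΩ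

lemma sum_filter_one (P : Ω → Prop) [DecidablePred P] :
    ∑ _ω ∈ univ.filter P, (1 : ℝ) = cnt P := by
  rw [sum_const, nsmul_eq_mul, mul_one, cnt]
  congr

lemma expecC_mul_cnt (C : Ω → Prop) [DecidablePred C] (X : Ω → ℝ) :
    expecC C X * cnt C = ∑ ω ∈ univ.filter C, X ω := by
  unfold expecC
  by_cases hC : cnt C = 0
  · have : univ.filter C = ∅ := by simpa [cnt, filter_congr_decidable] using hC
    simp [hC, this]
  · rw [div_mul_cancel₀ _ hC, filter_congr_decidable]

lemma prC_mul_cnt (C E : Ω → Prop) : prC C E * cnt C = cnt (fun ω => C ω ∧ E ω) := by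
  unfold prC
  by_cases hC : cnt C = 0
  · have hCE : cnt (fun ω => C ω ∧ E ω) ≤ 0 := hC ▸ cnt_mono fun _ h => h.1
    simp [hC, le_antisymm hCE (cnt_nonneg _)]
  · exact div_mul_cancel₀ _ hC

lemma sum_filter_eq_sum_image_sum_filter {β : Type*} (P : Ω → Prop) (Y : Ω → β) (X : Ω → ℝ) :
    ∑ ω ∈ univ.filter P, X ω
      = ∑ ρ ∈ univ.image Y, ∑ ω ∈ univ.filter (fun ω => Y ω = ρ ∧ P ω), X ω := by
  rw [← sum_fiberwise_of_maps_to fun ω _ => mem_image_of_mem Y (mem_univ ω)]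
  refine sum_congr rfl fun ρ _ => sum_congr ?_ fun _ _ => rfl
  ext ω
  simp [and_comm]

lemma sum_filter_comp_eq_sum_mul_cnt {α : Type*} (P : Ω → Prop) (X : Ω → α) (φ : α → ℝ) :
    ∑ ω ∈ univ.filter P, φ (X ω)
      = ∑ y ∈ univ.image X, φ y * cnt (fun ω => X ω = y ∧ P ω) := by
  rw [sum_filter_eq_sum_image_sum_filter P X]
  refine sum_congr rfl fun y _ => ?_
  rw [sum_congr rfl fun ω hω => congrArg φ (mem_filter.mp hω).2.1, sum_const, nsmul_eq_mul,
    mul_comm, cnt]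
  congr

lemma sum_filter_comp_mul_eq_of_fiber_cnt {α : Type*} {P Q : Ω → Prop} (X : Ω → α) {c d : ℝ}
    (h : ∀ y, cnt (fun ω => X ω = y ∧ P ω) * c = cnt (fun ω => X ω = y ∧ Q ω) * d)
    (φ : α → ℝ) :
    (∑ ω ∈ univ.filter P, φ (X ω)) * c = (∑ ω ∈ univ.filter Q, φ (X ω)) * d := by
  simp only [sum_filter_comp_eq_sum_mul_cnt, sum_mul, mul_assoc, h]

lemma expecC_eq_expecC_comp_of_fiber {β : Type*} {C : Ω → Prop} (X : Ω → ℝ) (Y : Ω → β) (ψ : β → ℝ)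
    (h : ∀ ρ, 0 < pr (fun ω => Y ω = ρ ∧ C ω) → expecC (fun ω => Y ω = ρ ∧ C ω) X = ψ ρ) :
    expecC C X = expecC C (fun ω => ψ (Y ω)) := by
  unfold expecC
  congr 1
  rw [sum_filter_eq_sum_image_sum_filter C Y, sum_filter_comp_eq_sum_mul_cnt]
  refine sum_congr rfl fun ρ _ => ?_
  rw [← expecC_mul_cnt]
  rcases (cnt_nonneg fun ω => Y ω = ρ ∧ C ω).eq_or_lt with h0 | hpos
  · rw [← h0, mul_zero, mul_zero]
  · rw [h ρ (pr_pos_iff_cnt_pos.mpr hpos)]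

lemma expecC_fiber_eq_of_condIndep {α β : Type*} {C : Ω → Prop} {X : Ω → α} {Y : Ω → β} {ρ : β}
    (hρ : 0 < cnt (fun ω => Y ω = ρ ∧ C ω))
    (hXY : ∀ y, prC C (fun ω => X ω = y ∧ Y ω = ρ)
      = prC C (fun ω => X ω = y) * prC C (fun ω => Y ω = ρ))
    (φ : α → ℝ) :
    expecC (fun ω => Y ω = ρ ∧ C ω) (fun ω => φ (X ω)) = expecC C (fun ω => φ (X ω)) := by
  have hC : 0 < cnt C := hρ.trans_le (cnt_mono fun _ h => h.2)
  have hcnt : ∀ y, cnt (fun ω => X ω = y ∧ Y ω = ρ ∧ C ω) * cnt C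
      = cnt (fun ω => X ω = y ∧ C ω) * cnt (fun ω => Y ω = ρ ∧ C ω) := fun y =>
    calc cnt (fun ω => X ω = y ∧ Y ω = ρ ∧ C ω) * cnt C
        = prC C (fun ω => X ω = y ∧ Y ω = ρ) * cnt C * cnt C := by
          rw [prC_mul_cnt]
          exact congrArg (· * cnt C) (cnt_congr fun ω => by tauto)
      _ = prC C (fun ω => X ω = y) * cnt C * (prC C (fun ω => Y ω = ρ) * cnt C) := by
          rw [hXY]; ring
      _ = cnt (fun ω => X ω = y ∧ C ω) * cnt (fun ω => Y ω = ρ ∧ C ω) := by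
          rw [prC_mul_cnt, prC_mul_cnt, cnt_congr fun ω => and_comm,
            cnt_congr (Q := fun ω => Y ω = ρ ∧ C ω) fun ω => and_comm]
  have hsum := sum_filter_comp_mul_eq_of_fiber_cnt X hcnt φ
  rw [← expecC_mul_cnt, ← expecC_mul_cnt] at hsum
  exact mul_right_cancel₀ (mul_ne_zero hρ.ne' hC.ne') (by linear_combination hsum)

lemma expecC_inter_eq_of_indep {α : Type*} {B E : Ω → Prop} {X : Ω → α}
    (hBE : 0 < cnt (fun ω => B ω ∧ E ω))
    (hE : ∀ y, pr (fun ω => E ω ∧ B ω ∧ X ω = y) = pr E * pr (fun ω => B ω ∧ X ω = y))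
    (φ : α → ℝ) :
    expecC (fun ω => B ω ∧ E ω) (fun ω => φ (X ω)) = expecC B (fun ω => φ (X ω)) := by
  have hΩ : (Fintype.card Ω : ℝ) ≠ 0 := (hBE.trans_le (cnt_le_card _)).ne'
  have hcnt : ∀ y, cnt (fun ω => X ω = y ∧ B ω ∧ E ω) * Fintype.card Ω
      = cnt (fun ω => X ω = y ∧ B ω) * cnt E := fun y =>
    calc cnt (fun ω => X ω = y ∧ B ω ∧ E ω) * Fintype.card Ω
        = pr (fun ω => E ω ∧ B ω ∧ X ω = y) * Fintype.card Ω * Fintype.card Ω := by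
          rw [pr_mul_card _ hΩ]
          exact congrArg (· * _) (cnt_congr fun ω => by tauto)
      _ = pr (fun ω => B ω ∧ X ω = y) * Fintype.card Ω * (pr E * Fintype.card Ω) := by
          rw [hE]; ring
      _ = cnt (fun ω => X ω = y ∧ B ω) * cnt E := by
          rw [pr_mul_card _ hΩ, pr_mul_card _ hΩ, cnt_congr fun ω => and_comm]
  have hsum := sum_filter_comp_mul_eq_of_fiber_cnt X hcnt φ
  have hcard := sum_filter_comp_mul_eq_of_fiber_cnt X hcnt fun _ => 1
  rw [← expecC_mul_cnt, ← expecC_mul_cnt] at hsum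
  simp only [sum_filter_one] at hcard
  have hprod : cnt B * cnt E ≠ 0 := hcard ▸ mul_ne_zero hBE.ne' hΩ
  exact mul_right_cancel₀ hprod <| by
    linear_combination hsum - expecC (fun ω => B ω ∧ E ω) (fun ω => φ (X ω)) * hcard

lemma expecC_one_sub_mul_indicator_mul {C : Ω → Prop} (hC : cnt C ≠ 0) (E : Ω → Prop)
    [DecidablePred E] (ξ m : ℝ) :
    expecC C (fun ω => (1 - ξ * if E ω then 1 else 0) * m) = m * (1 - ξ * prC C E) := by
  have hE : ∑ ω ∈ univ.filter C, (if E ω then (1 : ℝ) else 0) = cnt (fun ω => C ω ∧ E ω) := by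
    rw [sum_boole, filter_filter, cnt]
    congr
  refine mul_right_cancel₀ hC ?_
  calc expecC C (fun ω => (1 - ξ * if E ω then 1 else 0) * m) * cnt C
      = ∑ ω ∈ univ.filter C, (1 - ξ * if E ω then 1 else 0) * m := expecC_mul_cnt C _
    _ = m * (cnt C - ξ * cnt (fun ω => C ω ∧ E ω)) := by
        rw [← sum_filter_one, ← hE, mul_sum, ← sum_sub_distrib, mul_sum]
        exact sum_congr rfl fun _ _ => by ring
    _ = m * (1 - ξ * prC C E) * cnt C := by
        rw [← prC_mul_cnt]
        ring

end UniformProbability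

theorem statement_13_general {Ω : Type*} [Fintype Ω]
    (n n0 : Ω → ℝ≥0) (T : Ω → ℝ≥0∞) (G : Ω → ℝ) (A : Ω → AppUse)
    (ξ : ℝ) (τ : ℝ≥0)
    (hsup : ∀ (g : ℝ) (a : AppUse), 0 < pr (fun ω => G ω = g ∧ A ω = a) →
      ∀ ρ : ℝ≥0∞, 0 < pr (fun ω => T ω = ρ ∧ G ω = g ∧ A ω = a) →
        expecC (fun ω => T ω = ρ ∧ G ω = g ∧ A ω = a) (fun ω => (n ω : ℝ)) =
          (1 - ξ * (if ρ ≤ (τ : ℝ≥0∞) then (1 : ℝ) else 0)) *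
            expecC (fun ω => T ω = ρ ∧ G ω = g ∧ A ω = a) (fun ω => (n0 ω : ℝ)))
    (hci : ∀ (g : ℝ) (a : AppUse), 0 < pr (fun ω => G ω = g ∧ A ω = a) →
      ∀ (y : ℝ≥0) (ρ : ℝ≥0∞),
        prC (fun ω => G ω = g ∧ A ω = a) (fun ω => n0 ω = y ∧ T ω = ρ) =
          prC (fun ω => G ω = g ∧ A ω = a) (fun ω => n0 ω = y) *
            prC (fun ω => G ω = g ∧ A ω = a) (fun ω => T ω = ρ))
    (hA : ∀ (a : AppUse) (g : ℝ) (y : ℝ≥0),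
      pr (fun ω => A ω = a ∧ G ω = g ∧ n0 ω = y) =
        pr (fun ω => A ω = a) * pr (fun ω => G ω = g ∧ n0 ω = y)) :
    ∀ (g : ℝ) (a : AppUse), 0 < pr (fun ω => G ω = g ∧ A ω = a) →
      expecC (fun ω => G ω = g ∧ A ω = a) (fun ω => (n ω : ℝ)) =
        expecC (fun ω => G ω = g) (fun ω => (n0 ω : ℝ)) *
          (1 - ξ * prC (fun ω => G ω = g ∧ A ω = a) (fun ω => T ω ≤ (τ : ℝ≥0∞))) := by
  intro g a hpos
  have hC : 0 < cnt (fun ω => G ω = g ∧ A ω = a) := pr_pos_iff_cnt_pos.mp hpos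
  have hn0 : ∀ ρ, 0 < pr (fun ω => T ω = ρ ∧ G ω = g ∧ A ω = a) →
      expecC (fun ω => T ω = ρ ∧ G ω = g ∧ A ω = a) (fun ω => (n0 ω : ℝ)) =
        expecC (fun ω => G ω = g ∧ A ω = a) (fun ω => (n0 ω : ℝ)) := fun ρ hρ =>
    expecC_fiber_eq_of_condIndep (pr_pos_iff_cnt_pos.mp hρ) (fun y => hci g a hpos y ρ) _
  rw [expecC_eq_expecC_comp_of_fiber _ T
      (fun ρ => (1 - ξ * if ρ ≤ (τ : ℝ≥0∞) then 1 else 0) *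
        expecC (fun ω => G ω = g ∧ A ω = a) (fun ω => (n0 ω : ℝ)))
      fun ρ hρ => by rw [hsup g a hpos ρ hρ, hn0 ρ hρ],
    expecC_one_sub_mul_indicator_mul hC.ne', expecC_inter_eq_of_indep hC (hA a g)]

/-- suppression formula refined by app usage.  `Ω` nonempty finite
with the uniform measure; `n, n⁰ : Ω → ℝ≥0`, testing time `T : Ω → [0,∞]`, severity
`G : Ω → ℝ`, app usage `A : Ω → {app, no app}`, `ξ ∈ [0,1]`, `τ ∈ [0,∞)`.  Under
(i) the suppression hypothesis by severity and app usage, (ii) conditional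
independence of `n⁰` and `T` given `(G, A)`, and (iii) independence of `A` from
`(G, n⁰)`, for every `g, a` with `P(G = g, A = a) > 0`:
`E(n | G = g, A = a) = E(n⁰ | G = g)·(1 − ξ·P(T ≤ τ | G = g, A = a))`. -/
theorem statement_13 {Ω : Type*} [Fintype Ω] [Nonempty Ω]
    (n n0 : Ω → ℝ≥0) (T : Ω → ℝ≥0∞) (G : Ω → ℝ) (A : Ω → AppUse)
    (ξ : ℝ) (hξ0 : 0 ≤ ξ) (hξ1 : ξ ≤ 1) (τ : ℝ≥0)
    (hsup : ∀ (g : ℝ) (a : AppUse), 0 < pr (fun ω => G ω = g ∧ A ω = a) →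
      ∀ ρ : ℝ≥0∞, 0 < pr (fun ω => T ω = ρ ∧ G ω = g ∧ A ω = a) →
        expecC (fun ω => T ω = ρ ∧ G ω = g ∧ A ω = a) (fun ω => (n ω : ℝ)) =
          (1 - ξ * (if ρ ≤ (τ : ℝ≥0∞) then (1 : ℝ) else 0)) *
            expecC (fun ω => T ω = ρ ∧ G ω = g ∧ A ω = a) (fun ω => (n0 ω : ℝ)))
    (hci : ∀ (g : ℝ) (a : AppUse), 0 < pr (fun ω => G ω = g ∧ A ω = a) →
      ∀ (y : ℝ≥0) (ρ : ℝ≥0∞),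
        prC (fun ω => G ω = g ∧ A ω = a) (fun ω => n0 ω = y ∧ T ω = ρ) =
          prC (fun ω => G ω = g ∧ A ω = a) (fun ω => n0 ω = y) *
            prC (fun ω => G ω = g ∧ A ω = a) (fun ω => T ω = ρ))
    (hA : ∀ (a : AppUse) (g : ℝ) (y : ℝ≥0),
      pr (fun ω => A ω = a ∧ G ω = g ∧ n0 ω = y) =
        pr (fun ω => A ω = a) * pr (fun ω => G ω = g ∧ n0 ω = y)) :
    ∀ (g : ℝ) (a : AppUse), 0 < pr (fun ω => G ω = g ∧ A ω = a) →
      expecC (fun ω => G ω = g ∧ A ω = a) (fun ω => (n ω : ℝ)) =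
        expecC (fun ω => G ω = g) (fun ω => (n0 ω : ℝ)) *
          (1 - ξ * prC (fun ω => G ω = g ∧ A ω = a) (fun ω => T ω ≤ (τ : ℝ≥0∞))) :=
  statement_13_general n n0 T G A ξ τ hsup hci hA
end
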